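/- In any 3-associative IP loop (in particular, any ARIF loop), (x⁻¹·(y·x))ⁿ = x⁻¹·(yⁿ·x) for all x, y and all integers n. -/

import Mathlib

/-- A loop: a magma with two-sided identity and left/right division. -/
class Loop (M : Type*) extends Mul M, One M where
  ld : M → M → M
  rd : M → M → M
  mul_ld : ∀ x y : M, x * ld x y = y
  ld_mul : ∀ x y : M, ld x (x * y) = y
  rd_mul : ∀ x y : M, rd y x * x = y
  mul_rd : ∀ x y : M, rd (y * x) x = y
  one_mul : ∀ x : M, 1 * x = x
  mul_one : ∀ x : M, x * 1 = x

/-- An inverse property (IP) loop. -/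
class IPLoop (M : Type*) extends Loop M, Inv M where
  inv_mul_cancel_left : ∀ x y : M, x⁻¹ * (x * y) = y
  mul_inv_cancel_right : ∀ x y : M, (y * x) * x⁻¹ = y

/-- Left translation `L(x) : y ↦ x * y` as a permutation. -/
def Loop.Lperm {M : Type*} [Loop M] (x : M) : Equiv.Perm M :=
  ⟨fun y => x * y, fun y => Loop.ld x y, Loop.ld_mul x, Loop.mul_ld x⟩

/-- Right translation `R(x) : y ↦ y * x` as a permutation. -/
def Loop.Rperm {M : Type*} [Loop M] (x : M) : Equiv.Perm M :=
  ⟨fun y => y * x, fun y => Loop.rd y x, fun y => Loop.mul_rd x y, fun y => Loop.rd_mul x y⟩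

/-- Integer powers: `xⁿ = 1 · L(x)ⁿ`. -/
def Loop.pow {M : Type*} [Loop M] (x : M) (n : ℤ) : M := (Loop.Lperm x ^ n) 1

/-- The set of all products of the word `W` under all bracketings. -/
inductive Loop.Prods {M : Type*} [Loop M] : List M → M → Prop
  | nil : Loop.Prods [] 1
  | single (x : M) : Loop.Prods [x] x
  | mul {V₁ V₂ : List M} {p q : M} : V₁ ≠ [] → V₂ ≠ [] →
      Loop.Prods V₁ p → Loop.Prods V₂ q → Loop.Prods (V₁ ++ V₂) (p * q)

open Classical in
/-- The number of alternating blocks of a word. -/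
noncomputable def Loop.blocks {M : Type*} [Inv M] : List M → ℕ
  | [] => 0
  | [_] => 1
  | x :: y :: t =>
      (if x = y ∨ x = y⁻¹ then 0 else 1) + Loop.blocks (y :: t)


/-!
Induction on `n ≥ 0`, writing `c = x⁻¹·(y·x)`. The formula at `n`, applied to `(a⁻¹, b·a)`,
gives `(a·b)ⁿ = a·((b·a)ⁿ·a⁻¹)` and hence the power flexibility `(a·b)ⁿ·a = a·(b·a)ⁿ`.
With `a = y·x`, `b = x⁻¹` this reads `yⁿ·(y·x) = (y·x)·cⁿ`, so that
`x·cⁿ⁺¹ = (x·c)·cⁿ = (y·x)·cⁿ = yⁿ·(y·x) = yⁿ⁺¹·x`. Every reassociation used is of a word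
in two letters with at most three blocks. Negative exponents follow from `c⁻¹ = x⁻¹·(y⁻¹·x)`.
-/

namespace Loop

variable {M : Type*}

section Words

variable [Loop M]

theorem Prods.eq_one_of_nil {p : M} (h : Prods [] p) : p = 1 := by
  generalize hW : ([] : List M) = W at h
  cases h with
  | nil => rfl
  | single => cases hW
  | mul h₁ => exact absurd (List.append_eq_nil_iff.mp hW.symm).1 h₁

theorem Prods.append {V₁ V₂ : List M} {p q : M} (h₁ : Prods V₁ p) (h₂ : Prods V₂ q) :
    Prods (V₁ ++ V₂) (p * q) := by
  rcases eq_or_ne V₁ [] with rfl | hV₁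
  · rw [h₁.eq_one_of_nil, Loop.one_mul]
    exact h₂
  rcases eq_or_ne V₂ [] with rfl | hV₂
  · rw [h₂.eq_one_of_nil, Loop.mul_one, List.append_nil]
    exact h₁
  exact .mul hV₁ hV₂ h₁ h₂

theorem pow_zero (u : M) : pow u 0 = 1 := rfl

theorem pow_natCast_succ (u : M) (n : ℕ) : pow u ↑(n + 1) = u * pow u n := by
  rw [pow, Nat.cast_succ, add_comm, zpow_add, zpow_one, Equiv.Perm.mul_apply]
  rfl

theorem prods_replicate (u : M) (n : ℕ) : Prods (List.replicate n u) (pow u n) := by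
  induction n with
  | zero => exact .nil
  | succ n ih =>
    rw [pow_natCast_succ]
    exact (Prods.single u).append ih

end Words

section Blocks

variable [Inv M]

theorem blocks_cons_le (x : M) (W : List M) : blocks (x :: W) ≤ blocks W + 1 := by
  cases W with
  | nil => simp [blocks]
  | cons y W =>
    simp only [blocks]
    split_ifs <;> omega

theorem blocks_cons_self (x : M) (W : List M) : blocks (x :: x :: W) = blocks (x :: W) := by
  simp [blocks]

theorem blocks_inv_cons (x : M) (W : List M) : blocks (x⁻¹ :: x :: W) = blocks (x :: W) := by
  simp [blocks]

theorem blocks_replicate_append_le (u : M) (n : ℕ) (W : List M) :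
    blocks (List.replicate n u ++ W) ≤ blocks W + 1 := by
  induction n with
  | zero => simp
  | succ n ih =>
    cases n with
    | zero => exact blocks_cons_le u W
    | succ n =>
      rw [List.replicate_succ, List.cons_append, List.replicate_succ, List.cons_append,
        blocks_cons_self, ← List.cons_append, ← List.replicate_succ]
      exact ih

end Blocks

end Loop

namespace IPLoop

variable {M : Type*} [IPLoop M]

theorem inv_mul_cancel (x : M) : x⁻¹ * x = 1 := by
  simpa only [Loop.mul_one] using IPLoop.inv_mul_cancel_left x 1

theorem mul_inv_cancel (x : M) : x * x⁻¹ = 1 := by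
  simpa only [Loop.one_mul] using IPLoop.mul_inv_cancel_right x 1

theorem inv_inv (x : M) : x⁻¹⁻¹ = x := by
  simpa only [mul_inv_cancel, Loop.one_mul] using IPLoop.mul_inv_cancel_right x⁻¹ x

theorem mul_inv_cancel_left (x y : M) : x * (x⁻¹ * y) = y := by
  simpa only [inv_inv] using IPLoop.inv_mul_cancel_left x⁻¹ y

theorem mul_inv_rev (x y : M) : (x * y)⁻¹ = y⁻¹ * x⁻¹ := by
  have hx : x⁻¹ * (x * y) * (x * y)⁻¹ = x⁻¹ := IPLoop.mul_inv_cancel_right _ _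
  rw [IPLoop.inv_mul_cancel_left] at hx
  rw [← hx, IPLoop.inv_mul_cancel_left]

theorem ld_eq_inv_mul (x y : M) : Loop.ld x y = x⁻¹ * y := by
  simpa only [mul_inv_cancel_left] using Loop.ld_mul x (x⁻¹ * y)

theorem Lperm_inv (x : M) : Loop.Lperm x⁻¹ = (Loop.Lperm x)⁻¹ :=
  Equiv.ext fun y => (ld_eq_inv_mul x y).symm

theorem pow_inv (x : M) (n : ℤ) : Loop.pow x⁻¹ n = Loop.pow x (-n) := by
  rw [Loop.pow, Loop.pow, Lperm_inv, inv_zpow']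

end IPLoop

namespace Loop

variable (M : Type*) [IPLoop M]

def ThreeAssociative : Prop :=
  ∀ a b : M, ∀ W : List M,
    (∀ w ∈ W, w = a ∨ w = b ∨ w = a⁻¹ ∨ w = b⁻¹) → blocks W ≤ 3 →
    ∀ p q : M, Prods W p → Prods W q → p = q

namespace ThreeAssociative

variable {M}
variable (h3 : ThreeAssociative M)
include h3

theorem mul_pow_succ (u v : M) (n : ℕ) : u * pow v ↑(n + 1) = u * v * pow v n := by
  refine h3 u v (u :: List.replicate (n + 1) v) (by simp) ?_ _ _
    ((Prods.single u).append (prods_replicate v (n + 1)))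
    (((Prods.single u).append (Prods.single v)).append (prods_replicate v n))
  have := blocks_replicate_append_le v (n + 1) []
  simp only [List.append_nil] at this
  have := blocks_cons_le u (List.replicate (n + 1) v)
  simp only [blocks] at *
  omega

theorem pow_mul_mul_eq_pow_succ_mul (y x : M) (n : ℕ) :
    pow y n * (y * x) = pow y ↑(n + 1) * x := by
  refine h3 y x (List.replicate (n + 1) y ++ [x]) (by simp) ?_ _ _ ?_
    ((prods_replicate y (n + 1)).append (Prods.single x))
  · have := blocks_replicate_append_le y (n + 1) [x]
    simp only [blocks] at this
    omega
  · rw [List.replicate_succ', List.append_assoc]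
    exact (prods_replicate y n).append ((Prods.single y).append (Prods.single x))

theorem inv_conj (x y : M) : (x⁻¹ * (y * x))⁻¹ = x⁻¹ * (y⁻¹ * x) := by
  rw [IPLoop.mul_inv_rev, IPLoop.mul_inv_rev, IPLoop.inv_inv]
  refine h3 x y [x⁻¹, y⁻¹, x] (by simp) ?_ _ _
    (((Prods.single x⁻¹).append (Prods.single y⁻¹)).append (Prods.single x))
    ((Prods.single x⁻¹).append ((Prods.single y⁻¹).append (Prods.single x)))
  have := blocks_cons_le x⁻¹ [y⁻¹, x]
  have := blocks_cons_le y⁻¹ [x]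
  simp only [blocks] at *
  omega

theorem mul_pow_mul_inv_mul_self (a p : M) (n : ℕ) :
    a * (pow p n * a⁻¹) * a = a * pow p n := by
  have hP := ((Prods.single a).append ((prods_replicate p n).append (Prods.single a⁻¹))).append
    (Prods.single a)
  rw [List.singleton_append, List.cons_append, List.append_assoc] at hP
  have hQ := (Prods.single a).append ((prods_replicate p n).append
    ((Prods.single a⁻¹).append (Prods.single a)))
  have hblocks : blocks (a :: (List.replicate n p ++ [a⁻¹, a])) ≤ 3 := by
    have := blocks_cons_le a (List.replicate n p ++ [a⁻¹, a])
    have := blocks_replicate_append_le p n [a⁻¹, a]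
    rw [blocks_inv_cons] at this
    simp only [blocks] at *
    omega
  have h := h3 a p _ (by simp; tauto) hblocks _ _ hP hQ
  rwa [IPLoop.inv_mul_cancel, Loop.mul_one] at h

theorem pow_mul_mul_eq_mul_pow_mul {n : ℕ}
    (hconj : ∀ x y : M, pow (x⁻¹ * (y * x)) n = x⁻¹ * (pow y n * x)) (a b : M) :
    pow (a * b) n * a = a * pow (b * a) n := by
  have h := hconj a⁻¹ (b * a)
  rw [IPLoop.inv_inv, IPLoop.mul_inv_cancel_right] at h
  rw [h, h3.mul_pow_mul_inv_mul_self]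

theorem conj_pow_natCast (n : ℕ) (x y : M) :
    pow (x⁻¹ * (y * x)) n = x⁻¹ * (pow y n * x) := by
  induction n generalizing x y with
  | zero => rw [Nat.cast_zero, pow_zero, pow_zero, Loop.one_mul, IPLoop.inv_mul_cancel]
  | succ n ih =>
    have hflex := h3.pow_mul_mul_eq_mul_pow_mul ih (y * x) x⁻¹
    rw [IPLoop.mul_inv_cancel_right] at hflex
    calc pow (x⁻¹ * (y * x)) ↑(n + 1)
        = x⁻¹ * (x * pow (x⁻¹ * (y * x)) ↑(n + 1)) := (IPLoop.inv_mul_cancel_left _ _).symm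
      _ = x⁻¹ * (y * x * pow (x⁻¹ * (y * x)) n) := by
        rw [h3.mul_pow_succ, IPLoop.mul_inv_cancel_left]
      _ = x⁻¹ * (pow y ↑(n + 1) * x) := by rw [← hflex, h3.pow_mul_mul_eq_pow_succ_mul]

end ThreeAssociative

end Loop

/-- In any 3-associative IP loop, `(x⁻¹·(y·x))ⁿ = x⁻¹·(yⁿ·x)` for all integers `n`. -/
theorem three_assoc_conj_pow {M : Type*} [IPLoop M]
    (h3 : ∀ a b : M, ∀ W : List M,
      (∀ w ∈ W, w = a ∨ w = b ∨ w = a⁻¹ ∨ w = b⁻¹) → Loop.blocks W ≤ 3 →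
      ∀ p q : M, Loop.Prods W p → Loop.Prods W q → p = q) :
    ∀ (x y : M) (n : ℤ),
      Loop.pow (x⁻¹ * (y * x)) n = x⁻¹ * (Loop.pow y n * x) := by
  have h3 : Loop.ThreeAssociative M := h3
  intro x y n
  obtain ⟨m, rfl | rfl⟩ := Int.eq_nat_or_neg n
  · exact h3.conj_pow_natCast m x y
  · rw [← IPLoop.pow_inv, ← IPLoop.pow_inv, h3.inv_conj, h3.conj_pow_natCast]
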